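/- During the backward push algorithm, all residues and reserves remain nonnegative, and for every node u the quantity π(u,v) + ∑_{x∈V} r(x,v)·PPR(u,x) is invariant under a single push operation on any node x with residue r(x,v). -/
import Mathlib


/-- A single backward-push operation on a node `x` preserves
nonnegativity of residues and reserves, and leaves the quantity
`π u + ∑ y, r y * PPR u y` invariant for every node `u`. Here `PPR` satisfies
the recurrence `PPR u t = α·𝟙[u=t] + (1-α)/d_out(u) · ∑_{w : (u,w)∈E} PPR w t`,
and the push replaces `r x` by 0, adds `α·r x` to `π x`, and adds
`(1-α)·r x / d_out(y)` to `r y` for each in-neighbor `y` of `x`. -/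
theorem backward_push_step_invariant
    {V : Type*} [Fintype V] [DecidableEq V]
    (Adj : V → V → Prop) [DecidableRel Adj]
    (dout : V → ℕ)
    (hdout : ∀ u, dout u = (Finset.univ.filter (fun w => Adj u w)).card)
    (hdout_pos : ∀ u, 1 ≤ dout u)
    (α : ℝ) (hα : α ∈ Set.Ioo (0 : ℝ) 1)
    (PPR : V → V → ℝ) (hPPRnonneg : ∀ u t, 0 ≤ PPR u t)
    (hrec : ∀ u t, PPR u t = α * (if u = t then 1 else 0) +
      (1 - α) / (dout u : ℝ) * ∑ w ∈ Finset.univ.filter (fun w => Adj u w), PPR w t)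
    (r π : V → ℝ) (hrnonneg : ∀ y, 0 ≤ r y) (hπnonneg : ∀ y, 0 ≤ π y)
    (x : V)
    (r' π' : V → ℝ)
    (hr' : ∀ y, r' y = (if y = x then 0 else r y) +
      (if Adj y x then (1 - α) * r x / (dout y : ℝ) else 0))
    (hπ' : ∀ y, π' y = π y + (if y = x then α * r x else 0)) :
    (∀ y, 0 ≤ r' y) ∧ (∀ y, 0 ≤ π' y) ∧
      (∀ u, π' u + ∑ y, r' y * PPR u y = π u + ∑ y, r y * PPR u y) := by
  obtain ⟨hα0, hα1⟩ := hα
  have hα1' : (0:ℝ) < 1 - α := by linarith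
  have hdpos : ∀ y, (0:ℝ) < (dout y : ℝ) := by
    intro y
    exact_mod_cast Nat.lt_of_lt_of_le Nat.zero_lt_one (hdout_pos y)
  -- Matrix setup
  set P : Matrix V V ℝ := fun u w => if Adj u w then 1/(dout u : ℝ) else 0 with hPdef
  set M : Matrix V V ℝ := fun u t => PPR u t with hMdef
  -- forward recurrence in matrix form
  have hforward : M = α • (1 : Matrix V V ℝ) + (1-α) • (P * M) := by
    ext u t
    have h := hrec u t
    have hPM : (P * M) u t =
        (1/(dout u : ℝ)) * ∑ w ∈ Finset.univ.filter (fun w => Adj u w), PPR w t := by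
      rw [Matrix.mul_apply, Finset.mul_sum]
      rw [← Finset.sum_filter_of_ne (p := fun w => Adj u w)
        (f := fun w => P u w * M w t)]
      · refine Finset.sum_congr rfl fun w hw => ?_
        simp only [Finset.mem_filter] at hw
        simp [hPdef, hMdef, hw.2]
      · intro w _ hne
        by_contra hA
        simp [hPdef, hA] at hne
    simp only [Matrix.add_apply, Matrix.smul_apply, Matrix.one_apply, smul_eq_mul, hPM]
    rw [hMdef]
    simp only
    rw [h]
    ring
  have hAM : ((1 : Matrix V V ℝ) - (1-α) • P) * M = α • (1 : Matrix V V ℝ) := by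
    rw [Matrix.sub_mul, Matrix.one_mul, Matrix.smul_mul]
    nth_rewrite 1 [hforward]
    abel
  have hA1 : ((1 : Matrix V V ℝ) - (1-α) • P) * (α⁻¹ • M) = 1 := by
    rw [Matrix.mul_smul, hAM, smul_smul, inv_mul_cancel₀ (ne_of_gt hα0), one_smul]
  have hMA : M * ((1 : Matrix V V ℝ) - (1-α) • P) = α • (1 : Matrix V V ℝ) := by
    have h2 : (α⁻¹ • M) * ((1 : Matrix V V ℝ) - (1-α) • P) = 1 :=
      mul_eq_one_comm.mp hA1
    calc M * ((1 : Matrix V V ℝ) - (1-α) • P)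
        = α • ((α⁻¹ • M) * ((1 : Matrix V V ℝ) - (1-α) • P)) := by
          rw [Matrix.smul_mul, smul_smul, mul_inv_cancel₀ (ne_of_gt hα0), one_smul]
      _ = α • (1 : Matrix V V ℝ) := by rw [h2]
  -- backward recurrence, entrywise
  have hback : ∀ u t, PPR u t = α * (if u = t then 1 else 0) +
      (1-α) * ∑ y ∈ Finset.univ.filter (fun y => Adj y t), PPR u y / (dout y : ℝ) := by
    intro u t
    have hMback : M = α • (1 : Matrix V V ℝ) + (1-α) • (M * P) := by
      have := hMA
      rw [Matrix.mul_sub, Matrix.mul_one, Matrix.mul_smul] at this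
      have h3 : M = α • (1 : Matrix V V ℝ) + (1-α) • (M * P) := by
        rw [← this]; abel
      exact h3
    have h := congrArg (fun N => N u t) hMback
    simp only [Matrix.add_apply, Matrix.smul_apply, Matrix.one_apply, smul_eq_mul,
      Matrix.mul_apply] at h
    have hMP : ∑ y, M u y * P y t =
        ∑ y ∈ Finset.univ.filter (fun y => Adj y t), PPR u y / (dout y : ℝ) := by
      rw [← Finset.sum_filter_of_ne (p := fun y => Adj y t)
        (f := fun y => M u y * P y t)]
      · refine Finset.sum_congr rfl fun y hy => ?_
        simp only [Finset.mem_filter] at hy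
        simp [hPdef, hMdef, hy.2]
        ring
      · intro y _ hne
        by_contra hA
        simp [hPdef, hA] at hne
    rw [hMP] at h
    exact h
  refine ⟨?_, ?_, ?_⟩
  · intro y
    rw [hr' y]
    have h1 : (0:ℝ) ≤ (if y = x then 0 else r y) := by
      split <;> [rfl; exact hrnonneg y]
    have h2 : (0:ℝ) ≤ (if Adj y x then (1 - α) * r x / (dout y : ℝ) else 0) := by
      split
      · exact div_nonneg (mul_nonneg hα1'.le (hrnonneg x)) (hdpos y).le
      · rfl
    linarith
  · intro y
    rw [hπ' y]
    have h2 : (0:ℝ) ≤ (if y = x then α * r x else 0) := by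
      split
      · exact mul_nonneg hα0.le (hrnonneg x)
      · rfl
    linarith [hπnonneg y]
  · intro u
    have hsum : ∑ y, r' y * PPR u y =
        (∑ y, r y * PPR u y) - r x * PPR u x +
        (1-α) * r x * ∑ y ∈ Finset.univ.filter (fun y => Adj y x),
          PPR u y / (dout y : ℝ) := by
      have hsplit : ∀ y, r' y * PPR u y =
          (r y * PPR u y - (if y = x then r y * PPR u y else 0)) +
          (if Adj y x then (1-α) * r x * (PPR u y / (dout y : ℝ)) else 0) := by
        intro y
        rw [hr' y]
        by_cases hyx : y = x <;> by_cases hyA : Adj y x <;>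
          simp [hyx, hyA] <;> ring
      rw [Finset.sum_congr rfl (fun y _ => hsplit y), Finset.sum_add_distrib,
        Finset.sum_sub_distrib, Finset.sum_ite_eq' Finset.univ x
          (fun y => r y * PPR u y), ← Finset.sum_filter, Finset.mul_sum]
      simp
    rw [hsum, hπ' u]
    have hb := hback u x
    have hb' : r x * PPR u x = α * (if u = x then 1 else 0) * r x +
        (1-α) * r x * ∑ y ∈ Finset.univ.filter (fun y => Adj y x),
          PPR u y / (dout y : ℝ) := by
      rw [hb]; ring
    by_cases hux : u = x
    · subst hux
      simp only [eq_self_iff_true, if_true, if_pos] at hb' ⊢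
      linarith
    · simp only [if_neg hux] at hb' ⊢
      linarith
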